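/- arXiv:math/9201247 — 3 statements merged into one kernel-verified Lean document; each statement's English description precedes it below -/
import Mathlib

section
/- Let A be a nonempty set of infinite regular cardinals such that |pcf(A)| < min(A). Then pcf(pcf(A)) = pcf(A), and pcf(A) has a greatest element. -/
open Cardinal

universe u

/-- `ΠA` is the set of functions `f` with domain `A` such that `f(λ) < λ` for all `λ ∈ A`;
here such an `f` is represented by an `Ordinal`-valued function on `A` with `f a < a.ord`.
`prodCof A D` is the cofinality of the linear order `ΠA/D` (where `f <_D g` iff
`{λ : f(λ) < g(λ)} ∈ D`), i.e. the least cardinality of a subset of `ΠA` that is cofinal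
modulo `D`. -/
noncomputable def prodCof (A : Set Cardinal.{u}) (D : Ultrafilter A) : Cardinal.{u + 1} :=
  sInf { c : Cardinal.{u + 1} |
    ∃ F : Set ((a : A) → Ordinal.{u}),
      Cardinal.mk F = c ∧
      (∀ f ∈ F, ∀ a : A, f a < (a : Cardinal).ord) ∧
      (∀ g : (a : A) → Ordinal.{u}, (∀ a : A, g a < (a : Cardinal).ord) →
        ∃ f ∈ F, { a : A | g a ≤ f a } ∈ D) }

/-- `pcf(A)` is the set of cofinalities `cf(ΠA/D)` for `D` an ultrafilter on `A`. -/
def pcf (A : Set Cardinal.{u}) : Set Cardinal.{u} :=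
  { c | ∃ D : Ultrafilter A, prodCof A D = Cardinal.lift.{u + 1} c }

namespace PCFAux

/-- the set of "bounded" functions -/
def PiF (A : Set Cardinal.{u}) : Set ((a : A) → Ordinal.{u}) :=
  { f | ∀ a : A, f a < (a : Cardinal).ord }

def Cofinal (A : Set Cardinal.{u}) (D : Ultrafilter A)
    (F : Set ((a : A) → Ordinal.{u})) : Prop :=
  ∀ g ∈ PiF A, ∃ f ∈ F, { a : A | g a ≤ f a } ∈ D

def cofSet (A : Set Cardinal.{u}) (D : Ultrafilter A) : Set Cardinal.{u+1} :=
  { c | ∃ F : Set ((a : A) → Ordinal.{u}),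
      Cardinal.mk F = c ∧ F ⊆ PiF A ∧ Cofinal A D F }

lemma prodCof_eq (A : Set Cardinal.{u}) (D : Ultrafilter A) :
    prodCof A D = sInf (cofSet A D) := rfl

lemma cofSet_nonempty (A : Set Cardinal.{u}) (D : Ultrafilter A) :
    (cofSet A D).Nonempty :=
  ⟨_, PiF A, rfl, le_refl _, fun g hg => ⟨g, hg, by simp only [le_refl, Set.setOf_true]; exact Filter.univ_mem⟩⟩

lemma prodCof_le {A : Set Cardinal.{u}} {D : Ultrafilter A}
    {F : Set ((a : A) → Ordinal.{u})} (h1 : F ⊆ PiF A) (h2 : Cofinal A D F) :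
    prodCof A D ≤ Cardinal.mk F :=
  csInf_le' ⟨F, rfl, h1, h2⟩

lemma exists_min_family (A : Set Cardinal.{u}) (D : Ultrafilter A) :
    ∃ F : Set ((a : A) → Ordinal.{u}),
      Cardinal.mk F = prodCof A D ∧ F ⊆ PiF A ∧ Cofinal A D F :=
  csInf_mem (cofSet_nonempty A D)

lemma exists_sub {A : Set Cardinal.{u}} {D : Ultrafilter A}
    {S : Set ((a : A) → Ordinal.{u})} (h1 : S ⊆ PiF A)
    (h2 : Cardinal.mk S < prodCof A D) :
    ∃ g ∈ PiF A, ∀ f ∈ S, { a : A | f a < g a } ∈ D := by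
  by_contra hcon
  push_neg at hcon
  have hcof : Cofinal A D S := by
    intro g hg
    obtain ⟨f, hf, hD⟩ := hcon g hg
    refine ⟨f, hf, ?_⟩
    have h2 := (Ultrafilter.compl_mem_iff_notMem (s := { a : A | f a < g a }) (f := D)).mpr hD
    simpa [Set.compl_setOf, not_lt] using h2
  exact absurd (prodCof_le h1 hcof) (not_le.mpr h2)

end PCFAux

namespace PCFAux

section Basic
variable {A : Set Cardinal.{u}} {D : Ultrafilter A}

lemma zero_mem_PiF (hinf : ∀ a ∈ A, ℵ₀ ≤ a) : (fun _ : A => (0 : Ordinal.{u})) ∈ PiF A :=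
  fun a => (Cardinal.isSuccLimit_ord (hinf a a.2)).pos

lemma succ_mem_PiF (hinf : ∀ a ∈ A, ℵ₀ ≤ a) {g : (a : A) → Ordinal.{u}} (hg : g ∈ PiF A) :
    (fun a : A => g a + 1) ∈ PiF A := by
  intro a
  have := (Cardinal.isSuccLimit_ord (hinf a a.2)).succ_lt (hg a)
  simpa using this

lemma aleph0_le_prodCof (hinf : ∀ a ∈ A, ℵ₀ ≤ a) : ℵ₀ ≤ prodCof A D := by
  obtain ⟨F, hmk, hsub, hcof⟩ := exists_min_family A D
  rw [← hmk]
  by_contra hlt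
  push_neg at hlt
  have hfin : F.Finite := Cardinal.lt_aleph0_iff_set_finite.mp hlt
  rcases F.eq_empty_or_nonempty with hFe | hFne
  · obtain ⟨f, hf, -⟩ := hcof _ (zero_mem_PiF hinf)
    simp [hFe] at hf
  · set g : (a : A) → Ordinal.{u} := fun a => sSup ((fun f : (a : A) → Ordinal.{u} => f a) '' F) + 1 with hgdef
    have himfin : ∀ a : A, ((fun f : (a : A) → Ordinal.{u} => f a) '' F).Finite :=
      fun a => hfin.image _
    have hsup : ∀ a : A, sSup ((fun f : (a : A) → Ordinal.{u} => f a) '' F) < (a : Cardinal).ord := by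
      intro a
      have hmem := (hFne.image _).csSup_mem (himfin a)
      obtain ⟨f, hf, hfa⟩ := hmem
      rw [← hfa]
      exact hsub hf a
    have hg : g ∈ PiF A := by
      intro a
      have := (Cardinal.isSuccLimit_ord (hinf a a.2)).succ_lt (hsup a)
      simpa [hgdef] using this
    obtain ⟨f, hf, hD⟩ := hcof g hg
    obtain ⟨a, ha⟩ := Ultrafilter.nonempty_of_mem hD
    have h1 : f a ≤ sSup ((fun f : (a : A) → Ordinal.{u} => f a) '' F) :=
      le_csSup (himfin a).bddAbove ⟨f, hf, rfl⟩
    have h2 : g a ≤ f a := ha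
    have : g a ≤ sSup ((fun f : (a : A) → Ordinal.{u} => f a) '' F) := h2.trans h1
    simp only [hgdef] at this
    exact absurd this (by simp [Order.succ_le_iff])

end Basic
end PCFAux

namespace PCFAux

lemma small_of_mk_le {α : Type (u+1)} {c : Cardinal.{u}}
    (h : Cardinal.mk α ≤ Cardinal.lift.{u+1} c) : Small.{u} α := by
  obtain ⟨κ, hκ⟩ := Cardinal.mem_range_lift_of_le h
  rw [← Cardinal.mk_out κ, ← Cardinal.mk_uLift] at hκ
  obtain ⟨e⟩ := Cardinal.eq.mp hκ.symm
  exact ⟨⟨κ.out, ⟨e.trans Equiv.ulift⟩⟩⟩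

lemma sup_escape {o : Ordinal.{u}} {S : Set Ordinal.{u}}
    (hS : ∀ s ∈ S, s < o) (hsm : Cardinal.mk S < Cardinal.lift.{u+1} o.cof) :
    ∃ β < o, ∀ s ∈ S, s ≤ β := by
  have hsmall : Small.{u} S := small_of_mk_le hsm.le
  set v : Shrink.{u} S → Ordinal.{u} := fun i => ((equivShrink S).symm i : Ordinal) with hv
  have h2 : Cardinal.lift.{u+1} (Cardinal.mk (Shrink.{u} S)) = Cardinal.mk S := by
    have h3 := Cardinal.lift_mk_shrink.{u+1, u, 0} S
    rw [Cardinal.lift_id'.{u, u+1}] at h3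
    exact h3
  have hcard : Cardinal.mk (Shrink.{u} S) < o.cof := by
    rw [← Cardinal.lift_lt.{u, u+1}, h2]
    exact hsm
  have hlt : ∀ i, v i < o := fun i => hS _ ((equivShrink S).symm i).2
  have hsup : iSup v < o := Ordinal.iSup_lt_ord hcard hlt
  refine ⟨iSup v, hsup, fun s hs => ?_⟩
  have : v (equivShrink S ⟨s, hs⟩) = s := by simp [hv]
  rw [← this]
  exact Ordinal.le_iSup v _

end PCFAux

namespace PCFAux

section Pure
variable {A : Set Cardinal.{u}}

/-- evaluation computation for the principal ultrafilter -/
lemma prodCof_pure (hinf : ∀ a ∈ A, ℵ₀ ≤ a) {a : Cardinal.{u}} (ha : a ∈ A)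
    (hreg : a.IsRegular) :
    prodCof A (pure ⟨a, ha⟩) = Cardinal.lift.{u+1} a := by
  classical
  set a' : A := ⟨a, ha⟩
  have hordeq : (a' : Cardinal).ord = a.ord := rfl
  apply le_antisymm
  · -- the diagonal family
    set F : Set ((x : A) → Ordinal.{u}) :=
      Set.range (fun β : Set.Iio a.ord =>
        (fun x : A => if x = a' then (β : Ordinal) else 0)) with hF
    have hFsub : F ⊆ PiF A := by
      rintro f ⟨β, rfl⟩ x
      by_cases hx : x = a'
      · subst hx; simp only [if_pos rfl]; exact β.2
      · simpa [hx] using (Cardinal.isSuccLimit_ord (hinf x x.2)).pos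
    have hFcof : Cofinal A (pure a') F := by
      intro g hg
      refine ⟨_, ⟨⟨g a', hg a'⟩, rfl⟩, ?_⟩
      rw [Ultrafilter.mem_pure]
      simp
    refine (prodCof_le hFsub hFcof).trans ?_
    have hinj : Function.Injective (fun β : Set.Iio a.ord =>
        (fun x : A => if x = a' then (β : Ordinal) else 0)) := by
      intro β γ h
      have := congrFun h a'
      simpa [Subtype.ext_iff] using this
    rw [hF, Cardinal.mk_range_eq _ hinj, Ordinal.mk_Iio_ordinal, Cardinal.card_ord]
  · -- lower bound
    obtain ⟨F, hmk, hsub, hcof⟩ := exists_min_family A (pure a')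
    rw [← hmk]
    by_contra hlt
    push_neg at hlt
    set S : Set Ordinal.{u} := (fun f : (x : A) → Ordinal.{u} => f a') '' F with hS
    have hSlt : ∀ s ∈ S, s < a.ord := by rintro s ⟨f, hf, rfl⟩; exact hsub hf a'
    have hsm : Cardinal.mk S < Cardinal.lift.{u+1} a.ord.cof := by
      rw [hreg.cof_eq]
      exact (Cardinal.mk_image_le).trans_lt hlt
    obtain ⟨β, hβ, hub⟩ := sup_escape hSlt hsm
    set g : (x : A) → Ordinal.{u} := fun x => if x = a' then β + 1 else 0 with hg
    have hgPi : g ∈ PiF A := by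
      intro x
      by_cases hx : x = a'
      · subst hx
        simpa [hg] using (Cardinal.isSuccLimit_ord (hinf a ha)).succ_lt hβ
      · simpa [hg, hx] using (Cardinal.isSuccLimit_ord (hinf x x.2)).pos
    obtain ⟨f, hf, hDm⟩ := hcof g hgPi
    rw [Ultrafilter.mem_pure] at hDm
    have h1 : g a' ≤ f a' := hDm
    have h2 : f a' ≤ β := hub _ ⟨f, hf, rfl⟩
    simp only [hg, if_pos rfl] at h1
    have : β + 1 ≤ β := h1.trans h2
    simp [Order.succ_le_iff] at this

end Pure
end PCFAux

namespace PCFAux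

section Regular
variable {A : Set Cardinal.{u}}

lemma prodCof_isRegular (hinf : ∀ a ∈ A, ℵ₀ ≤ a) (D : Ultrafilter A) :
    (prodCof A D).IsRegular := by
  classical
  set κ := prodCof A D with hκ
  have hκinf : ℵ₀ ≤ κ := aleph0_le_prodCof hinf
  refine ⟨hκinf, ?_⟩
  by_contra hcof
  push_neg at hcof
  obtain ⟨F, hmk, hsub, hcofin⟩ := exists_min_family A D
  have hFeq : Cardinal.mk F = Cardinal.mk (κ.ord.ToType) := by
    rw [hmk, Cardinal.mk_toType, Cardinal.card_ord]
  obtain ⟨e⟩ := Cardinal.eq.mp hFeq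
  obtain ⟨S, hSunb', hScard⟩ := Order.exists_cof_eq κ.ord.ToType
  have hSunb : ∀ a, ∃ b ∈ S, ¬ b < a := fun a => (hSunb' a).imp fun b hb => ⟨hb.1, not_lt.mpr hb.2⟩
  rw [Ordinal.cof_toType] at hScard
  -- pieces
  set Fs : κ.ord.ToType → Set ((a : A) → Ordinal.{u}) :=
    fun s => { f | ∃ h : f ∈ F, e ⟨f, h⟩ ≤ s } with hFs
  have hFs_sub : ∀ s, Fs s ⊆ PiF A := by
    rintro s f ⟨h, -⟩
    exact hsub h
  have hFs_lt : ∀ s, Cardinal.mk (Fs s) < κ := by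
    intro s
    have hinj : Function.Injective
        (fun f : Fs s => (e ⟨f.1, f.2.choose⟩ : κ.ord.ToType)) := by
      intro f g h
      have h2 := e.injective h
      have h3 : (f : (a : A) → Ordinal.{u}) = g := congrArg (fun x : ↥F => (x : (a : A) → Ordinal.{u})) h2
      exact Subtype.ext h3
    have hrange : ∀ f : Fs s, (e ⟨f.1, f.2.choose⟩ : κ.ord.ToType) ∈ insert s (Set.Iio s) := by
      intro f
      rcases lt_or_eq_of_le f.2.choose_spec with h | h
      · exact Set.mem_insert_of_mem _ h
      · rw [h]; exact Set.mem_insert _ _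
    set T : Set κ.ord.ToType := insert s (Set.Iio s) with hT
    have h1 : Cardinal.mk (Fs s) ≤ Cardinal.mk T :=
      Cardinal.mk_le_of_injective (f := fun f : Fs s => (⟨e ⟨f.1, f.2.choose⟩, hrange f⟩ : T))
        (fun f g h => hinj (congrArg Subtype.val h))
    refine h1.trans_lt ?_
    have h2 : Cardinal.mk T ≤ Cardinal.mk (Set.Iio s) + 1 := Cardinal.mk_insert_le
    refine h2.trans_lt (Cardinal.add_lt_of_lt hκinf (Cardinal.mk_Iio_toType_ord_lt s) ?_)
    exact Cardinal.one_lt_aleph0.trans_le hκinf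
  have hub : ∀ s : κ.ord.ToType, ∃ g ∈ PiF A, ∀ f ∈ Fs s, { a : A | f a < g a } ∈ D :=
    fun s => exists_sub (hFs_sub s) (hFs_lt s)
  set ub : κ.ord.ToType → ((a : A) → Ordinal.{u}) := fun s => (hub s).choose with hubdef
  have hubPi : ∀ s, ub s ∈ PiF A := fun s => (hub s).choose_spec.1
  have hubdom : ∀ s, ∀ f ∈ Fs s, { a : A | f a < ub s a } ∈ D :=
    fun s => (hub s).choose_spec.2
  set G : Set ((a : A) → Ordinal.{u}) := ub '' S with hG
  have hGsub : G ⊆ PiF A := by rintro g ⟨s, -, rfl⟩; exact hubPi s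
  have hGcof : Cofinal A D G := by
    intro h hh
    obtain ⟨f, hf, hfD⟩ := hcofin h hh
    obtain ⟨s, hsS, hs⟩ := hSunb (e ⟨f, hf⟩)
    rw [not_lt] at hs
    have hfFs : f ∈ Fs s := ⟨hf, hs⟩
    refine ⟨ub s, ⟨s, hsS, rfl⟩, ?_⟩
    have := Filter.inter_mem hfD (hubdom s f hfFs)
    refine Filter.mem_of_superset this ?_
    rintro a ⟨h1, h2⟩
    simp only [Set.mem_setOf_eq] at h1 h2 ⊢
    exact (lt_of_le_of_lt h1 h2).le
  have : κ ≤ Cardinal.mk G := prodCof_le hGsub hGcof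
  have hGle : Cardinal.mk G ≤ Cardinal.mk S := Cardinal.mk_image_le
  rw [hScard] at hGle
  exact absurd ((this.trans hGle).trans_lt hcof) (lt_irrefl κ)

end Regular
end PCFAux

namespace PCFAux

section Lift
variable {A : Set Cardinal.{u}}

lemma isRegular_of_lift {c : Cardinal.{u}} (h : (Cardinal.lift.{u+1} c).IsRegular) :
    c.IsRegular := by
  constructor
  · exact Cardinal.aleph0_le_lift.mp h.1
  · have h2 := h.2
    rw [← Cardinal.lift_ord, ← Ordinal.lift_cof, Cardinal.lift_le] at h2
    exact h2

lemma mk_lift_of_small {α : Type (u+1)} [Small.{u} α] :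
    Cardinal.mk α = Cardinal.lift.{u+1} (Cardinal.mk (Shrink.{u} α)) := by
  have h3 := Cardinal.lift_mk_shrink.{u+1, u, 0} α
  rw [Cardinal.lift_id'.{u, u+1}] at h3
  exact h3.symm

lemma exists_lift_eq (hsm : Small.{u} (↥A)) (D : Ultrafilter A) :
    ∃ ν : Cardinal.{u}, prodCof A D = Cardinal.lift.{u+1} ν := by
  have hbdd : BddAbove A := Cardinal.bddAbove_iff_small.mpr hsm
  set O : Ordinal.{u} := (sSup A).ord + 1 with hO
  have hOlt : ∀ a : A, (a : Cardinal).ord < O := by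
    intro a
    have : (a : Cardinal).ord ≤ (sSup A).ord := Cardinal.ord_le_ord.mpr (le_csSup hbdd a.2)
    refine this.trans_lt ?_
    rw [hO, Ordinal.add_one_eq_succ]
    exact Order.lt_succ _
  have hle : prodCof A D ≤ Cardinal.mk (PiF A) :=
    prodCof_le (le_refl _) (fun g hg => ⟨g, hg, by
      simp only [le_refl, Set.setOf_true]; exact Filter.univ_mem⟩)
  have hinj : Cardinal.mk (PiF A) ≤ Cardinal.mk (↥A → Set.Iio O) := by
    refine Cardinal.mk_le_of_injective (f := fun f : PiF A =>
      fun a : A => (⟨f.1 a, (f.2 a).trans (hOlt a)⟩ : Set.Iio O)) ?_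
    intro f g h
    apply Subtype.ext
    funext a
    exact congrArg Subtype.val (congrFun h a)
  have hpow : Cardinal.mk (↥A → Set.Iio O) =
      Cardinal.mk (Set.Iio O) ^ Cardinal.mk (↥A) := (Cardinal.power_def _ _).symm
  have h1 : Cardinal.mk (Set.Iio O) = Cardinal.lift.{u+1} O.card := Ordinal.mk_Iio_ordinal O
  have h2 : Cardinal.mk (↥A) = Cardinal.lift.{u+1} (Cardinal.mk (Shrink.{u} (↥A))) :=
    @mk_lift_of_small _ hsm
  have : prodCof A D ≤ Cardinal.lift.{u+1} (O.card ^ Cardinal.mk (Shrink.{u} (↥A))) := by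
    rw [Cardinal.lift_power]
    rw [← h1, ← h2]
    exact hle.trans (hinj.trans_eq hpow)
  exact (Cardinal.mem_range_lift_of_le this).imp (fun ν h => h.symm)

lemma mem_pcf_self (hA : ∀ a ∈ A, a.IsRegular) : A ⊆ pcf A := by
  intro a ha
  exact ⟨pure ⟨a, ha⟩, prodCof_pure (fun x hx => (hA x hx).1) ha (hA a ha)⟩

lemma pcf_isRegular (hinf : ∀ a ∈ A, ℵ₀ ≤ a) {ν : Cardinal.{u}} (hν : ν ∈ pcf A) :
    ν.IsRegular := by
  obtain ⟨D, hD⟩ := hν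
  exact isRegular_of_lift (hD ▸ prodCof_isRegular hinf D)

end Lift
end PCFAux

namespace PCFAux

section Chain
variable {A : Set Cardinal.{u}}

lemma exists_chain (hinf : ∀ a ∈ A, ℵ₀ ≤ a) (D : Ultrafilter A)
    {b : Cardinal.{u}} (hb : prodCof A D = Cardinal.lift.{u+1} b) :
    ∃ seq : Ordinal.{u} → ((a : A) → Ordinal.{u}),
      (∀ α, α < b.ord → seq α ∈ PiF A) ∧
      (∀ β α, β < α → α < b.ord → { a : A | seq β a < seq α a } ∈ D) ∧
      (∀ g ∈ PiF A, ∃ α, α < b.ord ∧ { a : A | g a ≤ seq α a } ∈ D) := by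
  classical
  obtain ⟨F, hmk, hsub, hcof⟩ := exists_min_family A D
  have hmkeq : Cardinal.mk (Set.Iio b.ord) = Cardinal.mk F := by
    rw [Ordinal.mk_Iio_ordinal, Cardinal.card_ord, hmk, hb]
  obtain ⟨e⟩ := Cardinal.eq.mp hmkeq
  have hbinf : ℵ₀ ≤ Cardinal.lift.{u+1} b := hb ▸ aleph0_le_prodCof hinf
  -- one-step choice function
  set next : Set ((a : A) → Ordinal.{u}) → ((a : A) → Ordinal.{u}) := fun S =>
    if h : S ⊆ PiF A ∧ Cardinal.mk S < prodCof A D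
    then (exists_sub h.1 h.2).choose else (fun _ => 0) with hnext
  have next_spec : ∀ S, S ⊆ PiF A → Cardinal.mk S < prodCof A D →
      next S ∈ PiF A ∧ ∀ f ∈ S, { a : A | f a < next S a } ∈ D := by
    intro S h1 h2
    rw [hnext]
    simp only [dif_pos (And.intro h1 h2)]
    exact ⟨(exists_sub h1 h2).choose_spec.1, (exists_sub h1 h2).choose_spec.2⟩
  -- the recursion
  set seq : Ordinal.{u} → ((a : A) → Ordinal.{u}) :=
    WellFounded.fix Ordinal.lt_wf (fun α IH =>
      if hα : α < b.ord then
        next (({ x | ∃ β, ∃ hβ : β < α, IH β hβ = x } ∪ {(e ⟨α, hα⟩ : _).1}) ∩ PiF A)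
      else (fun _ => 0)) with hseq
  have hunfold : ∀ α, seq α =
      if hα : α < b.ord then
        next (({ x | ∃ β, ∃ _ : β < α, seq β = x } ∪ {(e ⟨α, hα⟩ : _).1}) ∩ PiF A)
      else (fun _ => 0) := by
    intro α
    rw [hseq]
    exact WellFounded.fix_eq _ _ _
  -- the sets used at successful stages are legitimate
  have hSok : ∀ α, (hα : α < b.ord) →
      (({ x | ∃ β, ∃ _ : β < α, seq β = x } ∪ {(e ⟨α, hα⟩ : _).1}) ∩ PiF A) ⊆ PiF A ∧
      Cardinal.mk ((({ x | ∃ β, ∃ _ : β < α, seq β = x } ∪ {(e ⟨α, hα⟩ : _).1}) ∩ PiF A) :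
        Set ((a : A) → Ordinal.{u})) < prodCof A D := by
    intro α hα
    constructor
    · exact Set.inter_subset_right
    · have h1 : ((({ x | ∃ β, ∃ _ : β < α, seq β = x } ∪ {(e ⟨α, hα⟩ : _).1}) ∩ PiF A) :
          Set ((a : A) → Ordinal.{u})) ⊆ (seq '' (Set.Iio α)) ∪ {(e ⟨α, hα⟩ : _).1} := by
        rintro x ⟨hx, -⟩
        rcases hx with ⟨β, hβ, rfl⟩ | hx
        · exact Or.inl ⟨β, hβ, rfl⟩
        · exact Or.inr hx
      have h2 := (Cardinal.mk_le_mk_of_subset h1).trans (Cardinal.mk_union_le _ _)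
      have h3 : Cardinal.mk (seq '' (Set.Iio α)) ≤ Cardinal.lift.{u+1} α.card :=
        Cardinal.mk_image_le.trans (le_of_eq (Ordinal.mk_Iio_ordinal α))
      have h4 : Cardinal.lift.{u+1} α.card < Cardinal.lift.{u+1} b :=
        Cardinal.lift_lt.mpr (Cardinal.lt_ord.mp hα)
      have h5 : Cardinal.mk ({(e ⟨α, hα⟩ : _).1} :
          Set ((a : A) → Ordinal.{u})) = 1 := Cardinal.mk_singleton _
      rw [hb]
      refine (h2.trans (add_le_add h3 (le_of_eq h5))).trans_lt ?_
      exact Cardinal.add_lt_of_lt hbinf h4 (Cardinal.one_lt_aleph0.trans_le hbinf)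
  have hPi : ∀ α, α < b.ord → seq α ∈ PiF A := by
    intro α hα
    rw [hunfold α]
    rw [dif_pos hα]
    exact (next_spec _ (hSok α hα).1 (hSok α hα).2).1
  refine ⟨seq, hPi, ?_, ?_⟩
  · intro β α hβα hα
    have hβPi : seq β ∈ PiF A := hPi β (hβα.trans hα)
    have hmem : seq β ∈ (({ x | ∃ γ, ∃ _ : γ < α, seq γ = x } ∪ {(e ⟨α, hα⟩ : _).1}) ∩ PiF A) :=
      ⟨Or.inl ⟨β, hβα, rfl⟩, hβPi⟩
    have := (next_spec _ (hSok α hα).1 (hSok α hα).2).2 _ hmem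
    rw [hunfold α, dif_pos hα]
    exact this
  · intro g hg
    obtain ⟨f, hf, hfD⟩ := hcof g hg
    set α : Set.Iio b.ord := e.symm ⟨f, hf⟩ with hα
    refine ⟨α.1, α.2, ?_⟩
    have hen : ((e ⟨α.1, α.2⟩ : _).1 : (a : A) → Ordinal.{u}) = f := by
      have : (⟨α.1, α.2⟩ : Set.Iio b.ord) = α := rfl
      rw [this, hα, e.apply_symm_apply]
    have hmem : f ∈ (({ x | ∃ γ, ∃ _ : γ < α.1, seq γ = x } ∪ {(e ⟨α.1, α.2⟩ : _).1}) ∩ PiF A) :=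
      ⟨Or.inr (by rw [hen]; rfl), hsub hf⟩
    have hstr := (next_spec _ (hSok α.1 α.2).1 (hSok α.1 α.2).2).2 _ hmem
    rw [hunfold α.1, dif_pos (show α.1 < b.ord from α.2)]
    have := Filter.inter_mem hfD hstr
    refine Filter.mem_of_superset this ?_
    rintro a ⟨h1, h2⟩
    simp only [Set.mem_setOf_eq] at h1 h2 ⊢
    exact (lt_of_le_of_lt h1 h2).le

end Chain
end PCFAux

namespace PCFAux

section Main
variable {A B : Set Cardinal.{u}}

lemma exists_bind_eq (hAne : A.Nonempty) (hAreg : ∀ a ∈ A, a.IsRegular)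
    (hB : B ⊆ pcf A) (hBsmall : Cardinal.mk (↥B) < Cardinal.lift.{u+1} (sInf A))
    (E : Ultrafilter B) :
    ∃ D : Ultrafilter A, prodCof A D = prodCof B E := by
  classical
  have hinf : ∀ a ∈ A, ℵ₀ ≤ a := fun a ha => (hAreg a ha).1
  haveI hBsm : Small.{u} (↥B) := small_of_mk_le hBsmall.le
  haveI : Nonempty (↥B) := by
    obtain ⟨x, hx⟩ := Ultrafilter.nonempty_of_mem (Filter.univ_mem (f := (E : Filter B)))
    exact ⟨x⟩
  -- choose witnessing ultrafilters and chains
  have hDb : ∀ x : B, ∃ D : Ultrafilter A, prodCof A D = Cardinal.lift.{u+1} (x : Cardinal) :=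
    fun x => hB x.2
  set Db : (x : B) → Ultrafilter A := fun x => (hDb x).choose with hDbdef
  have hDbeq : ∀ x : B, prodCof A (Db x) = Cardinal.lift.{u+1} (x : Cardinal) :=
    fun x => (hDb x).choose_spec
  set seqs : (x : B) → Ordinal.{u} → ((a : A) → Ordinal.{u}) :=
    fun x => (exists_chain hinf (Db x) (hDbeq x)).choose with hseqs
  have hseqPi : ∀ x : B, ∀ α, α < (x : Cardinal).ord → seqs x α ∈ PiF A :=
    fun x => (exists_chain hinf (Db x) (hDbeq x)).choose_spec.1
  have hseqInc : ∀ x : B, ∀ β α, β < α → α < (x : Cardinal).ord →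
      { a : A | seqs x β a < seqs x α a } ∈ Db x :=
    fun x => (exists_chain hinf (Db x) (hDbeq x)).choose_spec.2.1
  have hseqCof : ∀ x : B, ∀ g ∈ PiF A, ∃ α, α < (x : Cardinal).ord ∧
      { a : A | g a ≤ seqs x α a } ∈ Db x :=
    fun x => (exists_chain hinf (Db x) (hDbeq x)).choose_spec.2.2
  set D : Ultrafilter A := E.bind Db with hD
  have hmemD : ∀ s : Set (↥A), s ∈ D ↔ { x : B | s ∈ Db x } ∈ E := fun s => Iff.rfl
  -- the sup construction
  set FG : ((x : B) → Ordinal.{u}) → ((a : A) → Ordinal.{u}) :=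
    fun g a => sSup (Set.range (fun x : B => seqs x (g x) a)) with hFG
  have hrange_small : ∀ (g : (x : B) → Ordinal.{u}) (a : A),
      Small.{u} (Set.range (fun x : B => seqs x (g x) a)) := fun g a => inferInstance
  have hrange_bdd : ∀ (g : (x : B) → Ordinal.{u}) (a : A),
      BddAbove (Set.range (fun x : B => seqs x (g x) a)) := by
    intro g a
    haveI := hrange_small g a
    exact Ordinal.bddAbove_of_small
  have hFG_le : ∀ (g : (x : B) → Ordinal.{u}) (x : B) (a : A),
      seqs x (g x) a ≤ FG g a := by
    intro g x a
    exact le_csSup (hrange_bdd g a) ⟨x, rfl⟩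
  have hFG_Pi : ∀ g ∈ PiF B, FG g ∈ PiF A := by
    intro g hg a
    have hs : ∀ s ∈ Set.range (fun x : B => seqs x (g x) a), s < (a : Cardinal).ord := by
      rintro s ⟨x, rfl⟩
      exact hseqPi x (g x) (hg x) a
    have hsm : Cardinal.mk (Set.range (fun x : B => seqs x (g x) a)) <
        Cardinal.lift.{u+1} ((a : Cardinal).ord.cof) := by
      rw [(hAreg a a.2).cof_eq]
      refine Cardinal.mk_range_le.trans_lt (hBsmall.trans_le ?_)
      exact Cardinal.lift_le.mpr (csInf_le' a.2)
    obtain ⟨β, hβ, hub⟩ := sup_escape hs hsm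
    exact (csSup_le (Set.range_nonempty _) hub).trans_lt hβ
  -- canonical index function for elements of `PiF A`
  set gfun : ((a : A) → Ordinal.{u}) → ((x : B) → Ordinal.{u}) := fun h x =>
    if hh : h ∈ PiF A then (hseqCof x h hh).choose else 0 with hgfun
  have hgfun_Pi : ∀ h ∈ PiF A, gfun h ∈ PiF B := by
    intro h hh x
    simp only [hgfun, dif_pos hh]
    exact (hseqCof x h hh).choose_spec.1
  have hgfun_le : ∀ h, ∀ hh : h ∈ PiF A, ∀ x : B,
      { a : A | h a ≤ seqs x (gfun h x) a } ∈ Db x := by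
    intro h hh x
    simp only [hgfun, dif_pos hh]
    exact (hseqCof x h hh).choose_spec.2
  -- key domination fact
  have hkey : ∀ h, ∀ _ : h ∈ PiF A, ∀ g ∈ PiF B, ∀ x : B,
      gfun h x ≤ g x → { a : A | h a ≤ FG g a } ∈ Db x := by
    intro h hh g hg x hx
    rcases eq_or_lt_of_le hx with heq | hlt
    · refine Filter.mem_of_superset (heq ▸ hgfun_le h hh x) ?_
      intro a ha
      simp only [Set.mem_setOf_eq] at ha ⊢
      exact ha.trans (hFG_le g x a)
    · have h1 := hgfun_le h hh x
      have h2 := hseqInc x (gfun h x) (g x) hlt (hg x)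
      refine Filter.mem_of_superset (Filter.inter_mem h1 h2) ?_
      rintro a ⟨ha1, ha2⟩
      simp only [Set.mem_setOf_eq] at ha1 ha2 ⊢
      exact (ha1.trans ha2.le).trans (hFG_le g x a)
  refine ⟨D, le_antisymm ?_ ?_⟩
  · -- prodCof A D ≤ prodCof B E
    obtain ⟨G, hGmk, hGsub, hGcof⟩ := exists_min_family B E
    have h1 : FG '' G ⊆ PiF A := by
      rintro _ ⟨g, hgG, rfl⟩
      exact hFG_Pi g (hGsub hgG)
    have h2 : Cofinal A D (FG '' G) := by
      intro h hh
      obtain ⟨g, hgG, hgE⟩ := hGcof (gfun h) (hgfun_Pi h hh)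
      refine ⟨FG g, ⟨g, hgG, rfl⟩, ?_⟩
      rw [hmemD]
      refine Filter.mem_of_superset hgE ?_
      intro x hx
      exact hkey h hh g (hGsub hgG) x hx
    refine (prodCof_le h1 h2).trans ?_
    rw [← hGmk]
    exact Cardinal.mk_image_le
  · -- prodCof B E ≤ prodCof A D
    obtain ⟨H, hHmk, hHsub, hHcof⟩ := exists_min_family A D
    have h1 : gfun '' H ⊆ PiF B := by
      rintro _ ⟨h, hhH, rfl⟩
      exact hgfun_Pi h (hHsub hhH)
    have h2 : Cofinal B E (gfun '' H) := by
      intro g hg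
      set hstar : (a : A) → Ordinal.{u} := fun a => FG g a + 1 with hhstar
      have hstarPi : hstar ∈ PiF A := succ_mem_PiF hinf (hFG_Pi g hg)
      obtain ⟨h, hhH, hhD⟩ := hHcof hstar hstarPi
      refine ⟨gfun h, ⟨h, hhH, rfl⟩, ?_⟩
      by_contra hcon
      have hY : { x : B | gfun h x < g x } ∈ E := by
        have := (Ultrafilter.compl_mem_iff_notMem
          (s := { x : B | g x ≤ gfun h x }) (f := E)).mpr hcon
        simpa [Set.compl_setOf, not_le] using this
      have hZ : { a : A | h a < hstar a } ∈ D := by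
        rw [hmemD]
        refine Filter.mem_of_superset hY ?_
        intro x hx
        simp only [Set.mem_setOf_eq] at hx
        have h1' := hgfun_le h (hHsub hhH) x
        have h2' := hseqInc x (gfun h x) (g x) hx (hg x)
        refine Filter.mem_of_superset (Filter.inter_mem h1' h2') ?_
        rintro a ⟨ha1, ha2⟩
        simp only [Set.mem_setOf_eq] at ha1 ha2 ⊢
        calc h a ≤ seqs x (gfun h x) a := ha1
          _ < seqs x (g x) a := ha2
          _ ≤ FG g a := hFG_le g x a
          _ < hstar a := by
              simp only [hhstar, Ordinal.add_one_eq_succ]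
              exact Order.lt_succ _
      obtain ⟨a, ha⟩ := Ultrafilter.nonempty_of_mem (Filter.inter_mem hZ hhD)
      rcases ha with ⟨ha1, ha2⟩
      simp only [Set.mem_setOf_eq] at ha1 ha2
      exact absurd (ha2.trans_lt ha1) (lt_irrefl _)
    refine (prodCof_le h1 h2).trans ?_
    rw [← hHmk]
    exact Cardinal.mk_image_le

end Main
end PCFAux

namespace PCFAux

section Tail
variable {B : Set Cardinal.{u}}

lemma lift_le_prodCof_of_tail (hBreg : ∀ b ∈ B, Cardinal.IsRegular b)
    (E : Ultrafilter B) {ν : Cardinal.{u}} (hν : { x : B | ν < (x : Cardinal) } ∈ E) :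
    Cardinal.lift.{u+1} ν ≤ prodCof B E := by
  classical
  obtain ⟨F, hmk, hsub, hcof⟩ := exists_min_family B E
  rw [← hmk]
  by_contra hlt
  push_neg at hlt
  haveI : Small.{u} F := small_of_mk_le hlt.le
  have hbdd : ∀ x : B, BddAbove (Set.range (fun f : F => f.1 x)) :=
    fun x => Ordinal.bddAbove_of_small
  set g : (x : B) → Ordinal.{u} := fun x =>
    if ν < (x : Cardinal) then sSup (Set.range (fun f : F => f.1 x)) + 1 else 0 with hg
  have hsup : ∀ x : B, ν < (x : Cardinal) →
      sSup (Set.range (fun f : F => f.1 x)) < (x : Cardinal).ord := by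
    intro x hx
    rcases F.eq_empty_or_nonempty with hFe | hFne
    · have : (Set.range (fun f : F => f.1 x)) = ∅ := by
        rw [Set.range_eq_empty_iff]
        simp [hFe]
      rw [this]
      simpa using (Cardinal.isSuccLimit_ord (hBreg x x.2).1).pos
    · have hs : ∀ s ∈ Set.range (fun f : F => f.1 x), s < (x : Cardinal).ord := by
        rintro s ⟨f, rfl⟩
        exact hsub f.2 x
      have hsm : Cardinal.mk (Set.range (fun f : F => f.1 x)) <
          Cardinal.lift.{u+1} ((x : Cardinal).ord.cof) := by
        rw [(hBreg x x.2).cof_eq]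
        refine Cardinal.mk_range_le.trans_lt (hlt.trans_le (Cardinal.lift_le.mpr hx.le))
      obtain ⟨β, hβ, hub⟩ := sup_escape hs hsm
      exact (csSup_le (by
        obtain ⟨f, hf⟩ := hFne
        exact ⟨f x, ⟨⟨f, hf⟩, rfl⟩⟩) hub).trans_lt hβ
  have hgPi : g ∈ PiF B := by
    intro x
    by_cases hx : ν < (x : Cardinal)
    · have h1 := hsup x hx
      have := (Cardinal.isSuccLimit_ord (hBreg x x.2).1).succ_lt h1
      simpa [hg, hx] using this
    · simpa [hg, hx] using (Cardinal.isSuccLimit_ord (hBreg x x.2).1).pos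
  obtain ⟨f, hfF, hfE⟩ := hcof g hgPi
  obtain ⟨x, hx⟩ := Ultrafilter.nonempty_of_mem (Filter.inter_mem hν hfE)
  rcases hx with ⟨hx1, hx2⟩
  simp only [Set.mem_setOf_eq] at hx1 hx2
  have h1 : f x ≤ sSup (Set.range (fun f : F => f.1 x)) :=
    le_csSup (hbdd x) ⟨⟨f, hfF⟩, rfl⟩
  rw [hg] at hx2
  simp only [if_pos hx1] at hx2
  have : sSup (Set.range (fun f : F => f.1 x)) + 1 ≤ sSup (Set.range (fun f : F => f.1 x)) :=
    hx2.trans h1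
  simp [Order.succ_le_iff] at this

end Tail
end PCFAux

open PCFAux in
theorem pcf_pcf_eq_and_max_exists' (A : Set Cardinal.{u}) (hne : A.Nonempty)
    (hA : ∀ a ∈ A, a.IsRegular)
    (hsmall : Cardinal.mk (pcf A) < Cardinal.lift.{u + 1} (sInf A)) :
    pcf (pcf A) = pcf A ∧ ∃ m : Cardinal.{u}, IsGreatest (pcf A) m := by
  classical
  have hinf : ∀ a ∈ A, ℵ₀ ≤ a := fun a ha => (hA a ha).1
  set B : Set Cardinal.{u} := pcf A with hB
  have hBreg : ∀ b ∈ B, Cardinal.IsRegular b := fun b hb => pcf_isRegular hinf hb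
  have hBinf : ∀ b ∈ B, ℵ₀ ≤ b := fun b hb => (hBreg b hb).1
  have hApcf : A ⊆ B := mem_pcf_self hA
  have heq : pcf B = B := by
    apply Set.eq_of_subset_of_subset
    · rintro c ⟨E, hE⟩
      obtain ⟨D, hD⟩ := exists_bind_eq hne hA (le_refl B) hsmall E
      exact ⟨D, hD.trans hE⟩
    · intro ν hν
      exact ⟨pure ⟨ν, hν⟩, prodCof_pure hBinf hν (hBreg ν hν)⟩
  refine ⟨heq, ?_⟩
  by_contra hno
  push_neg at hno
  haveI hBne : Nonempty (↥B) := by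
    obtain ⟨a, ha⟩ := hne
    exact ⟨⟨a, hApcf ha⟩⟩
  haveI : NoMaxOrder (↥B) := by
    constructor
    intro x
    have hx := hno x.1
    rw [IsGreatest] at hx
    push_neg at hx
    have hx2 : ¬ (x.1 ∈ upperBounds B) := hx x.2
    rw [upperBounds, Set.mem_setOf_eq] at hx2
    push_neg at hx2
    obtain ⟨b, hb, hbx⟩ := hx2
    exact ⟨⟨b, hb⟩, by exact_mod_cast hbx⟩
  set E : Ultrafilter (↥B) := Ultrafilter.of Filter.atTop with hE
  have htail : ∀ ν ∈ B, { x : B | ν < (x : Cardinal) } ∈ E := by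
    intro ν hν
    have h1 : Set.Ioi (⟨ν, hν⟩ : ↥B) ∈ (Filter.atTop : Filter ↥B) :=
      Filter.Ioi_mem_atTop _
    have h2 := Ultrafilter.of_le (Filter.atTop : Filter ↥B)
    have h3 : Set.Ioi (⟨ν, hν⟩ : ↥B) ∈ E := h2 h1
    refine Filter.mem_of_superset h3 ?_
    intro x hx
    exact hx
  obtain ⟨D, hD⟩ := exists_bind_eq hne hA (le_refl B) hsmall E
  have hsmA : Small.{u} (↥A) :=
    small_of_mk_le ((Cardinal.mk_le_mk_of_subset hApcf).trans hsmall.le)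
  obtain ⟨κ, hκ⟩ := exists_lift_eq hsmA D
  have hκB : κ ∈ B := ⟨D, hκ⟩
  have hgr : IsGreatest B κ := by
    refine ⟨hκB, ?_⟩
    intro ν hν
    have := (htail ν hν)
    have hle : Cardinal.lift.{u+1} ν ≤ prodCof B E := lift_le_prodCof_of_tail hBreg E this
    rw [← hD, hκ] at hle
    exact Cardinal.lift_le.mp hle
  exact hno κ hgr


/-- A family `{B_ν : ν ∈ pcf(A)}` of subsets of `A` is a family of *generators* for `A` if
for every ultrafilter `D` on `A`, `cf(ΠA/D)` is the least `ν ∈ pcf(A)` with `B_ν ∈ D`. -/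
def IsGenerators (A : Set Cardinal.{u}) (B : Cardinal.{u} → Set Cardinal.{u}) : Prop :=
  (∀ ν ∈ pcf A, B ν ⊆ A) ∧
  ∀ D : Ultrafilter A, ∃ ν₀ : Cardinal.{u},
    prodCof A D = Cardinal.lift.{u + 1} ν₀ ∧
    IsLeast { ν | ν ∈ pcf A ∧ { a : A | (a : Cardinal) ∈ B ν } ∈ D } ν₀

/-- Let `A` be a nonempty set of infinite regular cardinals such that
`|pcf(A)| < min(A)`.  Then `pcf(pcf(A)) = pcf(A)`, and `pcf(A)` has a greatest element. -/
theorem pcf_pcf_eq_and_max_exists (A : Set Cardinal.{u}) (hne : A.Nonempty)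
    (hA : ∀ a ∈ A, a.IsRegular)
    (hsmall : Cardinal.mk (pcf A) < Cardinal.lift.{u + 1} (sInf A)) :
    pcf (pcf A) = pcf A ∧ ∃ m : Cardinal.{u}, IsGreatest (pcf A) m := by
  exact pcf_pcf_eq_and_max_exists' A hne hA hsmall
end

section
/- Let A be a set of infinite regular cardinals and let {B_ν : ν ∈ pcf(A)} be a family of generators for A, i.e., for every ultrafilter D on A, cf(ΠA/D) equals the least ν ∈ pcf(A) with B_ν ∈ D. Then for every ν ∈ pcf(A), ν is the greatest element of pcf(B_ν); moreover, if ν ∈ A then ν is the greatest element of B_ν. -/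
open Cardinal

universe u

/-! ### Auxiliary lemmas -/


lemma prodCofSet_nonempty (A : Set Cardinal.{u}) (D : Ultrafilter A) :
    { c : Cardinal.{u + 1} |
    ∃ F : Set ((a : A) → Ordinal.{u}),
      Cardinal.mk F = c ∧
      (∀ f ∈ F, ∀ a : A, f a < (a : Cardinal).ord) ∧
      (∀ g : (a : A) → Ordinal.{u}, (∀ a : A, g a < (a : Cardinal).ord) →
        ∃ f ∈ F, { a : A | g a ≤ f a } ∈ D) }.Nonempty := by
  refine ⟨_, {f : (a : A) → Ordinal.{u} | ∀ a : A, f a < (a : Cardinal).ord}, rfl,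
    fun f hf => hf, fun g hg => ⟨g, hg, ?_⟩⟩
  simp only [le_refl, Set.setOf_true]
  exact Filter.univ_mem

lemma prodCof_spec (A : Set Cardinal.{u}) (D : Ultrafilter A) :
    ∃ F : Set ((a : A) → Ordinal.{u}),
      Cardinal.mk F = prodCof A D ∧
      (∀ f ∈ F, ∀ a : A, f a < (a : Cardinal).ord) ∧
      (∀ g : (a : A) → Ordinal.{u}, (∀ a : A, g a < (a : Cardinal).ord) →
        ∃ f ∈ F, { a : A | g a ≤ f a } ∈ D) :=
  csInf_mem (prodCofSet_nonempty A D)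

lemma prodCof_le (A : Set Cardinal.{u}) (D : Ultrafilter A)
    (F : Set ((a : A) → Ordinal.{u}))
    (h1 : ∀ f ∈ F, ∀ a : A, f a < (a : Cardinal).ord)
    (h2 : ∀ g : (a : A) → Ordinal.{u}, (∀ a : A, g a < (a : Cardinal).ord) →
        ∃ f ∈ F, { a : A | g a ≤ f a } ∈ D) :
    prodCof A D ≤ Cardinal.mk F :=
  csInf_le (OrderBot.bddBelow _) ⟨F, rfl, h1, h2⟩

/-- inclusion of a subset of `A` into `A` -/
def incl {S A : Set Cardinal.{u}} (hSA : S ⊆ A) : S → A := fun b => ⟨b.1, hSA b.2⟩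

lemma incl_injective {S A : Set Cardinal.{u}} (hSA : S ⊆ A) :
    Function.Injective (incl hSA) := by
  intro x y h
  have h2 : (incl hSA x).1 = (incl hSA y).1 := congrArg Subtype.val h
  exact Subtype.ext h2

lemma range_incl {S A : Set Cardinal.{u}} (hSA : S ⊆ A) :
    Set.range (incl hSA) = { a : A | (a : Cardinal) ∈ S } := by
  ext a
  constructor
  · rintro ⟨b, rfl⟩; exact b.2
  · intro h; exact ⟨⟨a.1, h⟩, Subtype.ext rfl⟩

/-- A set of ordinals below `o` of cardinality less than the cofinality of `o` is bounded. -/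
lemma exists_bound {o : Ordinal.{u}} {S : Set Ordinal.{u}} (hS : ∀ s ∈ S, s < o)
    (hcard : Cardinal.mk S < Cardinal.lift.{u + 1} o.cof) :
    ∃ β < o, ∀ s ∈ S, s ≤ β := by
  have hsub : S ⊆ Set.Iio o := fun s hs => hS s hs
  have hsmall : Small.{u} S := small_subset hsub
  set f : Shrink.{u} S → Ordinal.{u} := fun i => ((equivShrink S).symm i : Ordinal) with hf
  have hι : Cardinal.mk (Shrink.{u} S) < o.cof := by
    rw [← Cardinal.lift_lt.{u, u + 1}]
    calc Cardinal.lift.{u + 1} (Cardinal.mk (Shrink.{u} S))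
        = Cardinal.lift.{u} (Cardinal.mk S) := Cardinal.lift_mk_shrink.{u + 1, u, 0} S
      _ = Cardinal.mk S := Cardinal.lift_id'.{u, u + 1} _
      _ < Cardinal.lift.{u + 1} o.cof := hcard
  have hlt : ∀ i, f i < o := fun i => hS _ ((equivShrink S).symm i).2
  have hsup : iSup f < o := Ordinal.iSup_lt_ord hι hlt
  refine ⟨iSup f, hsup, fun s hs => ?_⟩
  have : s = f (equivShrink S ⟨s, hs⟩) := by simp [hf]
  rw [this]
  exact le_ciSup (Ordinal.bddAbove_range.{u, u} f) _

/-- Transfer of `prodCof` along restriction to a large subset. -/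
lemma prodCof_comap_eq {A : Set Cardinal.{u}} (hA0 : ∀ a ∈ A, a ≠ 0)
    {S : Set Cardinal.{u}} (hSA : S ⊆ A) (D : Ultrafilter A)
    (hlarge : Set.range (incl hSA) ∈ D) :
    prodCof S (D.comap (incl_injective hSA) hlarge) = prodCof A D := by
  classical
  set ι := incl hSA with hι
  set D' := D.comap (incl_injective hSA) hlarge with hD'
  apply le_antisymm
  · -- restrict a cofinal family on A to S
    obtain ⟨F, hmk, hval, hcof⟩ := prodCof_spec A D
    have := prodCof_le S D' ((fun f => f ∘ ι) '' F) ?_ ?_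
    · exact this.trans (Cardinal.mk_image_le.trans_eq hmk)
    · rintro f' ⟨f, hf, rfl⟩ b
      exact hval f hf (ι b)
    · intro g hg
      set gbar : (a : A) → Ordinal.{u} :=
        fun a => if h : (a : Cardinal) ∈ S then g ⟨a, h⟩ else 0 with hgbar
      have hgbarval : ∀ a : A, gbar a < (a : Cardinal).ord := by
        intro a
        by_cases h : (a : Cardinal) ∈ S
        · rw [hgbar]; simp only [dif_pos h]; exact hg ⟨a, h⟩
        · rw [hgbar]; simp only [dif_neg h]
          have : (0 : Cardinal) < (a : Cardinal) :=
            pos_iff_ne_zero.2 (hA0 a a.2)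
          simpa using Cardinal.ord_lt_ord.2 this
      obtain ⟨f, hf, hT⟩ := hcof gbar hgbarval
      refine ⟨f ∘ ι, ⟨f, hf, rfl⟩, ?_⟩
      rw [hD', Ultrafilter.mem_comap]
      apply Filter.mem_of_superset (Filter.inter_mem hT hlarge)
      rintro a ⟨ha, b, rfl⟩
      refine ⟨b, ?_, rfl⟩
      have hb2 : ((ι b : A) : Cardinal) ∈ S := b.2
      have : gbar (ι b) = g b := by
        rw [hgbar]
        show (if h : ((ι b : A) : Cardinal) ∈ S then g ⟨_, h⟩ else 0) = g b
        rw [dif_pos hb2]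
        exact congrArg g (Subtype.ext rfl)
      show g b ≤ f (ι b)
      rw [← this]
      exact ha
  · -- extend a cofinal family on S to A
    obtain ⟨F', hmk, hval, hcof⟩ := prodCof_spec S D'
    set extend : ((b : S) → Ordinal.{u}) → ((a : A) → Ordinal.{u}) :=
      fun f a => if h : (a : Cardinal) ∈ S then f ⟨a, h⟩ else 0 with hextend
    have := prodCof_le A D (extend '' F') ?_ ?_
    · exact this.trans (Cardinal.mk_image_le.trans_eq hmk)
    · rintro f' ⟨f, hf, rfl⟩ a
      by_cases h : (a : Cardinal) ∈ S
      · rw [hextend]; simp only [dif_pos h]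
        exact hval f hf ⟨a, h⟩
      · rw [hextend]; simp only [dif_neg h]
        have : (0 : Cardinal) < (a : Cardinal) :=
          pos_iff_ne_zero.2 (hA0 a a.2)
        simpa using Cardinal.ord_lt_ord.2 this
    · intro g hg
      obtain ⟨f, hf, hT⟩ := hcof (g ∘ ι) (fun b => hg (ι b))
      refine ⟨extend f, ⟨f, hf, rfl⟩, ?_⟩
      rw [hD', Ultrafilter.mem_comap] at hT
      apply Filter.mem_of_superset hT
      rintro a ⟨b, hb, rfl⟩
      show g (ι b) ≤ extend f (ι b)
      have hb2 : ((ι b : A) : Cardinal) ∈ S := b.2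
      have : extend f (ι b) = f b := by
        rw [hextend]
        show (if h : ((ι b : A) : Cardinal) ∈ S then f ⟨_, h⟩ else 0) = f b
        rw [dif_pos hb2]
        exact congrArg f (Subtype.ext rfl)
      rw [this]
      exact hb

/-- `prodCof` at a principal ultrafilter on a regular cardinal. -/
lemma prodCof_pure {A : Set Cardinal.{u}} (hA : ∀ a ∈ A, a.IsRegular)
    {a : Cardinal.{u}} (ha : a ∈ A) :
    prodCof A (pure ⟨a, ha⟩) = Cardinal.lift.{u + 1} a := by
  classical
  set ahat : A := ⟨a, ha⟩ with hahat
  have hreg : a.IsRegular := hA a ha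
  apply le_antisymm
  · set F : Set ((x : A) → Ordinal.{u}) :=
      Set.range (fun β : Set.Iio a.ord => fun x : A => if x = ahat then β.1 else 0) with hF
    have h1 : ∀ f ∈ F, ∀ x : A, f x < (x : Cardinal).ord := by
      rintro f ⟨β, rfl⟩ x
      by_cases h : x = ahat
      · simp only [if_pos h, h]; exact β.2
      · simp only [if_neg h]
        have : (0 : Cardinal) < (x : Cardinal) :=
          (hA x x.2).pos
        simpa using Cardinal.ord_lt_ord.2 this
    have h2 : ∀ g : (x : A) → Ordinal.{u}, (∀ x : A, g x < (x : Cardinal).ord) →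
        ∃ f ∈ F, { x : A | g x ≤ f x } ∈ (pure ahat : Ultrafilter A) := by
      intro g hg
      refine ⟨_, ⟨⟨g ahat, hg ahat⟩, rfl⟩, ?_⟩
      rw [Ultrafilter.mem_pure]
      show g ahat ≤ if ahat = ahat then g ahat else 0
      simp
    calc prodCof A (pure ahat) ≤ Cardinal.mk F := prodCof_le A (pure ahat) F h1 h2
      _ ≤ Cardinal.mk (Set.Iio a.ord) := Cardinal.mk_range_le
      _ = Cardinal.lift.{u + 1} a := by
          rw [Ordinal.mk_Iio_ordinal, Cardinal.card_ord]
  · apply le_csInf (prodCofSet_nonempty A (pure ahat))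
    rintro c ⟨F, rfl, hval, hcof⟩
    by_contra hlt
    push_neg at hlt
    set V : Set Ordinal.{u} := (fun f : (x : A) → Ordinal.{u} => f ahat) '' F with hV
    have hVlt : ∀ v ∈ V, v < a.ord := by
      rintro v ⟨f, hf, rfl⟩
      exact hval f hf ahat
    have hVcard : Cardinal.mk V < Cardinal.lift.{u + 1} a.ord.cof := by
      rw [hreg.cof_eq]
      exact Cardinal.mk_image_le.trans_lt hlt
    obtain ⟨β, hβ, hbound⟩ := exists_bound hVlt hVcard
    set g : (x : A) → Ordinal.{u} := fun x => if x = ahat then β + 1 else 0 with hg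
    have hgval : ∀ x : A, g x < (x : Cardinal).ord := by
      intro x
      by_cases h : x = ahat
      · rw [hg]; simp only [if_pos h, h]
        rw [Ordinal.add_one_eq_succ]
        exact (Cardinal.isSuccLimit_ord hreg.aleph0_le).succ_lt hβ
      · rw [hg]; simp only [if_neg h]
        have : (0 : Cardinal) < (x : Cardinal) :=
          (hA x x.2).pos
        simpa using Cardinal.ord_lt_ord.2 this
    obtain ⟨f, hf, hT⟩ := hcof g hgval
    rw [Ultrafilter.mem_pure] at hT
    have h1 : g ahat ≤ f ahat := hT
    have h2 : f ahat ≤ β := hbound _ ⟨f, hf, rfl⟩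
    rw [hg] at h1
    simp only [if_pos rfl] at h1
    exact absurd (h1.trans h2) (by simp)

lemma mem_pcf_of_mem {A : Set Cardinal.{u}} (hA : ∀ a ∈ A, a.IsRegular)
    {a : Cardinal.{u}} (ha : a ∈ A) : a ∈ pcf A :=
  ⟨pure ⟨a, ha⟩, prodCof_pure hA ha⟩

/-- Let `A` be a set of infinite regular cardinals and let
`{B_ν : ν ∈ pcf(A)}` be a family of generators for `A`.  Then for every `ν ∈ pcf(A)`, `ν`
is the greatest element of `pcf(B_ν)`; moreover, if `ν ∈ A` then `ν` is the greatest
element of `B_ν`. -/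
theorem isGreatest_pcf_generator (A : Set Cardinal.{u}) (hA : ∀ a ∈ A, a.IsRegular)
    (B : Cardinal.{u} → Set Cardinal.{u}) (hB : IsGenerators A B) :
    ∀ ν ∈ pcf A, IsGreatest (pcf (B ν)) ν ∧ (ν ∈ A → IsGreatest (B ν) ν) := by
  intro ν hν
  have hA0 : ∀ a ∈ A, a ≠ 0 := fun a ha => (hA a ha).pos.ne'
  have hBA : B ν ⊆ A := hB.1 ν hν
  -- upper bound for pcf (B ν)
  have hub : ∀ μ ∈ pcf (B ν), μ ≤ ν := by
    rintro μ ⟨D'', hD''⟩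
    set D₂ : Ultrafilter A := D''.map (incl hBA) with hD₂
    have hlarge : Set.range (incl hBA) ∈ D₂ := by
      rw [hD₂, Ultrafilter.mem_map]
      have : (incl hBA) ⁻¹' (Set.range (incl hBA)) = Set.univ := by
        ext b; simp [Set.mem_preimage, Set.mem_range]
      rw [this]
      exact Filter.univ_mem
    have hcomap : D₂.comap (incl_injective hBA) hlarge = D'' := by
      apply Ultrafilter.coe_injective
      rw [Ultrafilter.coe_comap, hD₂, Ultrafilter.coe_map]
      exact Filter.comap_map (incl_injective hBA)
    have heq : prodCof A D₂ = Cardinal.lift.{u + 1} μ := by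
      rw [← prodCof_comap_eq hA0 hBA D₂ hlarge, hcomap, hD'']
    obtain ⟨ν₀, hν₀, hleast⟩ := hB.2 D₂
    have hμν₀ : ν₀ = μ := Cardinal.lift_injective (hν₀.symm.trans heq)
    rw [← hμν₀]
    apply hleast.2
    refine ⟨hν, ?_⟩
    rw [← range_incl hBA]
    exact hlarge
  -- ν ∈ pcf (B ν)
  obtain ⟨D, hD⟩ := hν
  obtain ⟨ν₀, hν₀, hleast⟩ := hB.2 D
  have hνν₀ : ν₀ = ν := Cardinal.lift_injective (hν₀.symm.trans hD)
  have hBν : { a : A | (a : Cardinal) ∈ B ν } ∈ D := by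
    have := hleast.1.2
    rwa [hνν₀] at this
  have hlarge : Set.range (incl hBA) ∈ D := by rw [range_incl hBA]; exact hBν
  have hmem : ν ∈ pcf (B ν) := by
    refine ⟨D.comap (incl_injective hBA) hlarge, ?_⟩
    rw [prodCof_comap_eq hA0 hBA D hlarge, hD]
  refine ⟨⟨hmem, hub⟩, fun hνA => ⟨?_, ?_⟩⟩
  · -- ν ∈ B ν
    obtain ⟨ν₁, hν₁, hleast₁⟩ := hB.2 (pure ⟨ν, hνA⟩)
    have : ν₁ = ν := by
      apply Cardinal.lift_injective
      rw [← hν₁, prodCof_pure hA hνA]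
    have h := hleast₁.1.2
    rw [this] at h
    rwa [Ultrafilter.mem_pure] at h
  · -- upper bound for B ν
    intro μ hμ
    exact hub μ (mem_pcf_of_mem (fun b hb => hA b (hBA hb)) hμ)
end

section
/- Assume the Singular Cardinals Hypothesis: for every singular cardinal λ with 2^{cf(λ)} < λ, λ^{cf(λ)} = λ⁺. Then Tarski's conjecture holds: for every limit ordinal β and every strictly increasing sequence ⟨σ_ξ : ξ < β⟩ of ordinals with supremum α, ∏_{ξ<β} ℵ_{σ_ξ} = ℵ_α^{|β|}. -/
open Cardinal Ordinal Set

universe u v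

lemma my_prod_power {ι : Type v} (f : ι → Cardinal.{v}) (a : Cardinal.{v}) :
    (Cardinal.prod f) ^ a = Cardinal.prod (fun i => f i ^ a) := by
  have hp : Cardinal.prod f = #(Π j, (f j).out) := by rw [mk_pi]; simp [mk_out]
  rw [hp, ← mk_out a, power_def]
  have : #(a.out → Π j, (f j).out) = #(Π j, a.out → (f j).out) :=
    mk_congr (Equiv.piComm _)
  rw [this, mk_pi]
  congr 1; funext j
  rw [← power_def, mk_out]

lemma my_pow_le_of_lt_cof {μ κ b : Cardinal.{u}} (hμ : ℵ₀ ≤ μ) (hκ : κ < μ.ord.cof)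
    (hb : ∀ ν < μ, ν ^ κ ≤ b) : μ ^ κ ≤ μ * b := by
  classical
  set o := μ.ord with ho
  letI : IsWellOrder o.ToType (· < ·) := isWellOrder_lt
  have hcard : #o.ToType = μ := by rw [mk_toType, card_ord]
  have hpow : μ ^ κ = #(κ.out → o.ToType) := by
    rw [← hcard]; conv_lhs => rw [← mk_out κ]
    exact power_def _ _
  have hbdd : ∀ f : κ.out → o.ToType, ∃ c : o.ToType, ∀ i, f i ≤ c := by
    intro f
    have hS : #(Set.range f) < Ordinal.cof (type (α := o.ToType) (· < ·)) := by
      rw [type_toType]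
      exact lt_of_le_of_lt (mk_range_le.trans_eq (mk_out κ)) hκ
    obtain ⟨c, hc⟩ : ∃ c : o.ToType, ∀ b ∈ Set.range f, b < c := by
      by_contra hne
      push_neg at hne
      have hcof : IsCofinal (Set.range f) := fun c => by
        obtain ⟨b, hb, h⟩ := hne c; exact ⟨b, hb, h⟩
      exact absurd (Order.cof_le hcof) (not_le.2 (by rwa [cof_type] at hS))
    exact ⟨c, fun i => (hc (f i) (Set.mem_range_self i)).le⟩
  have hle : #(κ.out → o.ToType) ≤
      #(Σ c : o.ToType, (κ.out → {x : o.ToType // x ≤ c})) := by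
    refine ⟨⟨fun f => ⟨Classical.choose (hbdd f),
      fun i => ⟨f i, Classical.choose_spec (hbdd f) i⟩⟩, ?_⟩⟩
    intro f g h
    funext i
    exact congrArg (fun p : Σ c : o.ToType, (κ.out → {x : o.ToType // x ≤ c}) =>
      (p.2 i).1) h
  have hslice : ∀ c : o.ToType, #(κ.out → {x : o.ToType // x ≤ c}) ≤ b := by
    intro c
    have h1 : #{x : o.ToType // x ≤ c} < μ := by
      have hopt : #{x : o.ToType // x ≤ c} ≤ #{x : o.ToType // x < c} + 1 := by
        rw [← mk_option]
        refine ⟨⟨fun x => if h : x.1 < c then some ⟨x.1, h⟩ else none, ?_⟩⟩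
        intro x y h
        by_cases hx : x.1 < c <;> by_cases hy : y.1 < c <;> simp [hx, hy] at h
        · exact Subtype.ext h
        · exact Subtype.ext (((not_lt.1 hx).antisymm x.2).symm.trans
            ((not_lt.1 hy).antisymm y.2))
      have h2 : #{x : o.ToType // x < c} < μ := by
        have : #{x : o.ToType // x < c} = (typein (α := o.ToType) (· < ·) c).card :=
          card_typein c
        rw [this]
        exact Cardinal.lt_ord.1 (typein_lt_self c)
      have h3 : #{x : o.ToType // x < c} + 1 < μ := by
        rcases lt_or_ge (#{x : o.ToType // x < c}) ℵ₀ with h | h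
        · exact lt_of_lt_of_le (add_lt_aleph0 h one_lt_aleph0) hμ
        · rwa [add_one_of_aleph0_le h]
      exact lt_of_le_of_lt hopt h3
    calc #(κ.out → {x : o.ToType // x ≤ c})
        = #{x : o.ToType // x ≤ c} ^ #(κ.out) := (power_def _ _).symm
      _ = #{x : o.ToType // x ≤ c} ^ κ := by rw [mk_out]
      _ ≤ b := hb _ h1
  calc μ ^ κ = #(κ.out → o.ToType) := hpow
    _ ≤ #(Σ c : o.ToType, (κ.out → {x : o.ToType // x ≤ c})) := hle
    _ = Cardinal.sum (fun c : o.ToType => #(κ.out → {x : o.ToType // x ≤ c})) := mk_sigma _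
    _ ≤ Cardinal.sum (fun _ : o.ToType => b) := sum_le_sum _ _ hslice
    _ = μ * b := by rw [sum_const', hcard]

lemma my_mu_le_prod {μ : Cardinal.{u}} (hμ0 : ℵ₀ ≤ μ) :
    ∃ g : μ.ord.cof.ord.ToType → Cardinal.{u},
      (∀ i, g i < μ) ∧ μ ≤ Cardinal.prod g := by
  letI : IsWellOrder μ.ord.ToType (· < ·) := isWellOrder_lt
  letI : IsWellOrder μ.ord.cof.ord.ToType (· < ·) := isWellOrder_lt
  have holim : Order.IsSuccLimit μ.ord := isSuccLimit_ord hμ0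
  obtain ⟨f, hf⟩ := Ordinal.exists_fundamental_sequence μ.ord
  set t : μ.ord.cof.ord.ToType → Ordinal.{u} :=
    fun i => f (typein (α := μ.ord.cof.ord.ToType) (· < ·) i) (typein_lt_self i) with ht
  have ht_lt : ∀ i, t i < μ.ord := fun i => by
    have := lt_blsub.{u,u} f _ (typein_lt_self i)
    rwa [hf.blsub_eq] at this
  have hb1 : ∀ i, t i + 1 < μ.ord := fun i => by
    rw [add_one_eq_succ]; exact holim.succ_lt (ht_lt i)
  refine ⟨fun i => (t i + 1).card, fun i => Cardinal.lt_ord.1 (hb1 i), ?_⟩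
  rw [← Cardinal.lift_le.{u+1}, lift_prod]
  have h2 : ∀ i, Cardinal.lift.{u+1} ((t i + 1).card) = #(Set.Iic (t i)) := by
    intro i
    have hIic : (Set.Iic (t i)) = Set.Iio (t i + 1) := by
      rw [add_one_eq_succ, Order.Iio_succ]
    rw [hIic, Cardinal.mk_Iio_ordinal]
  have h1 : Cardinal.lift.{u+1} μ = #(ULift.{u+1} μ.ord.ToType) := by
    rw [mk_uLift, mk_toType, card_ord]
  rw [h1]
  have hemb : #(ULift.{u+1} μ.ord.ToType) ≤ #(Π i : μ.ord.cof.ord.ToType, (Set.Iic (t i))) := by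
    refine ⟨⟨fun x i => ⟨min (typein (α := μ.ord.ToType) (· < ·) x.down) (t i),
      Set.mem_Iic.2 (min_le_right _ _)⟩, ?_⟩⟩
    intro x y hxy
    have hxb : typein (α := μ.ord.ToType) (· < ·) x.down < blsub.{u,u} μ.ord.cof.ord f := by
      rw [hf.blsub_eq]; exact typein_lt_self _
    have hyb : typein (α := μ.ord.ToType) (· < ·) y.down < blsub.{u,u} μ.ord.cof.ord f := by
      rw [hf.blsub_eq]; exact typein_lt_self _
    obtain ⟨j1, hj1, hx⟩ := lt_blsub_iff.1 hxb
    obtain ⟨j2, hj2, hy⟩ := lt_blsub_iff.1 hyb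
    have hj : max j1 j2 < μ.ord.cof.ord := max_lt hj1 hj2
    have hfx : typein (α := μ.ord.ToType) (· < ·) x.down ≤ f (max j1 j2) hj :=
      hx.trans (hf.monotone hj1 hj (le_max_left _ _))
    have hfy : typein (α := μ.ord.ToType) (· < ·) y.down ≤ f (max j1 j2) hj :=
      hy.trans (hf.monotone hj2 hj (le_max_right _ _))
    set i0 : μ.ord.cof.ord.ToType := enum (α := μ.ord.cof.ord.ToType) (· < ·)
      ⟨max j1 j2, by rw [type_toType]; exact hj⟩ with hi0
    have hti : t i0 = f (max j1 j2) hj := by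
      have hgen : ∀ (a : Ordinal.{u}) (ha : a < μ.ord.cof.ord), a = max j1 j2 →
          f a ha = f (max j1 j2) hj := by
        rintro a ha rfl; rfl
      exact hgen _ _ (typein_enum _ _)
    have hcoord := congrArg Subtype.val (congrFun hxy i0)
    simp only [hti] at hcoord
    have : typein (α := μ.ord.ToType) (· < ·) x.down
        = typein (α := μ.ord.ToType) (· < ·) y.down := by
      rwa [min_eq_left hfx, min_eq_left hfy] at hcoord
    have hdown : x.down = y.down := typein_injective _ this
    exact ULift.ext x y hdown
  refine hemb.trans ?_
  rw [mk_pi]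
  refine le_of_eq ?_
  congr 1
  funext i
  rw [h2 i]

lemma my_sch_pow
    (hSCH : ∀ lam : Cardinal.{u}, ℵ₀ ≤ lam → lam.ord.cof < lam →
      (2 : Cardinal.{u}) ^ lam.ord.cof < lam → lam ^ lam.ord.cof = Order.succ lam)
    {κ : Cardinal.{u}} (hκ : ℵ₀ ≤ κ) (μ : Cardinal.{u}) :
    μ ^ κ ≤ max (Order.succ μ) (2 ^ κ) := by
  induction μ using WellFoundedLT.induction with
  | ind μ IH =>
  rcases le_or_gt μ (2 ^ κ) with hsm | hbig
  · refine le_max_of_le_right ?_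
    calc μ ^ κ ≤ (2 ^ κ) ^ κ := power_le_power_right hsm
      _ = 2 ^ (κ * κ) := power_mul.symm
      _ = 2 ^ κ := by rw [mul_eq_self hκ]
  have hμ0 : ℵ₀ ≤ μ := ((hκ.trans (cantor κ).le).trans hbig.le)
  have hκμ : κ < μ := lt_of_le_of_lt (cantor κ).le hbig
  by_cases hlim : ∀ ν < μ, Order.succ ν < μ
  · rcases lt_or_ge κ (μ.ord.cof) with hcof | hcof
    · -- below the cofinality
      have hbnd : ∀ ν < μ, ν ^ κ ≤ μ := fun ν hν =>
        (IH ν hν).trans (max_le (hlim ν hν).le hbig.le)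
      calc μ ^ κ ≤ μ * μ := my_pow_le_of_lt_cof hμ0 hcof hbnd
        _ = μ := mul_eq_self hμ0
        _ ≤ max (Order.succ μ) (2 ^ κ) := le_max_of_le_left (Order.le_succ μ)
    · -- singular case
      obtain ⟨g, hg_lt, hμprod⟩ := my_mu_le_prod hμ0
      have hιcard : #μ.ord.cof.ord.ToType = μ.ord.cof := by rw [mk_toType, card_ord]
      have hbnd : ∀ i, g i ^ κ ≤ μ := fun i =>
        (IH (g i) (hg_lt i)).trans (max_le (hlim _ (hg_lt i)).le hbig.le)
      have hsing : μ.ord.cof < μ := lt_of_le_of_lt hcof hκμ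
      have h2cof : (2:Cardinal.{u}) ^ μ.ord.cof < μ :=
        lt_of_le_of_lt (power_le_power_left two_ne_zero hcof) hbig
      calc μ ^ κ ≤ (Cardinal.prod g) ^ κ := power_le_power_right hμprod
        _ = Cardinal.prod (fun i => g i ^ κ) := my_prod_power g κ
        _ ≤ Cardinal.prod (fun _ : μ.ord.cof.ord.ToType => μ) := prod_le_prod _ _ hbnd
        _ = μ ^ #μ.ord.cof.ord.ToType := prod_const' _ _
        _ = μ ^ μ.ord.cof := by rw [hιcard]
        _ = Order.succ μ := hSCH μ hμ0 hsing h2cof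
        _ ≤ max (Order.succ μ) (2 ^ κ) := le_max_left _ _
  · -- successor case
    push_neg at hlim
    obtain ⟨ν, hν, hs⟩ := hlim
    have hμν : μ = Order.succ ν := le_antisymm hs (Order.succ_le_of_lt hν)
    subst hμν
    have hνbig : 2 ^ κ ≤ ν := Order.lt_succ_iff.1 hbig
    have hν0 : ℵ₀ ≤ ν := (hκ.trans (cantor κ).le).trans hνbig
    have hreg : Cardinal.IsRegular (Order.succ ν) := isRegular_succ hν0
    have hcof : κ < (Order.succ ν).ord.cof := by
      rw [hreg.cof_eq]
      exact ((cantor κ).le.trans hνbig).trans_lt (Order.lt_succ ν)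
    have hb : ∀ ρ < Order.succ ν, ρ ^ κ ≤ ν ^ κ := fun ρ hρ =>
      power_le_power_right (Order.lt_succ_iff.1 hρ)
    have h2 : ν ^ κ ≤ Order.succ ν :=
      (IH ν (Order.lt_succ ν)).trans (max_le le_rfl (hνbig.trans (Order.le_succ ν)))
    have h1 : (Order.succ ν) ^ κ ≤ (Order.succ ν) * (ν ^ κ) :=
      my_pow_le_of_lt_cof (hν0.trans (Order.le_succ ν)) hcof hb
    refine le_max_of_le_left ?_
    calc (Order.succ ν) ^ κ ≤ (Order.succ ν) * (ν ^ κ) := h1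
      _ ≤ (Order.succ ν) * (Order.succ ν) := mul_le_mul_right h2 _
      _ = Order.succ ν := mul_eq_self (hν0.trans (Order.le_succ ν))
      _ ≤ Order.succ (Order.succ ν) := Order.le_succ _

/-- Assume the Singular Cardinals Hypothesis: for every singular cardinal
`λ` with `2^{cf(λ)} < λ`, `λ^{cf(λ)} = λ⁺`.  Then Tarski's conjecture holds: for every
limit ordinal `β` and every strictly increasing sequence `⟨σ_ξ : ξ < β⟩` of ordinals with
supremum `α`, `∏_{ξ<β} ℵ_{σ_ξ} = ℵ_α ^ |β|`. -/
theorem tarski_of_SCH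
    (hSCH : ∀ lam : Cardinal.{u}, ℵ₀ ≤ lam → lam.ord.cof < lam →
      (2 : Cardinal.{u}) ^ lam.ord.cof < lam → lam ^ lam.ord.cof = Order.succ lam) :
    ∀ β : Ordinal.{u}, Order.IsSuccLimit β →
      ∀ σ : Ordinal.{u} → Ordinal.{u},
        (∀ ξ η : Ordinal.{u}, ξ < η → η < β → σ ξ < σ η) →
        ∀ α : Ordinal.{u}, α = (⨆ ξ : Set.Iio β, σ ξ.1) →
          Cardinal.prod (fun ξ : Set.Iio β => ℵ_ (σ ξ.1)) =
            Cardinal.lift.{u + 1} ((ℵ_ α) ^ β.card) := by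
  intro β hβ σ hmono α hα
  classical
  have hκ : ℵ₀ ≤ β.card := (aleph0_le_cof.2 hβ).trans (cof_le_card β)
  have hbdd : BddAbove (Set.range fun ξ : Set.Iio β => σ ξ.1) :=
    Ordinal.bddAbove_of_small
  have hσ_le : ∀ ξ : Set.Iio β, σ ξ.1 ≤ α := fun ξ => by
    rw [hα]; exact le_ciSup hbdd ξ
  -- upper bound
  have hub : Cardinal.prod (fun ξ : Set.Iio β => ℵ_ (σ ξ.1)) ≤
      Cardinal.lift.{u + 1} ((ℵ_ α) ^ β.card) := by
    calc Cardinal.prod (fun ξ : Set.Iio β => ℵ_ (σ ξ.1))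
        ≤ Cardinal.prod (fun _ : Set.Iio β => ℵ_ α) :=
          prod_le_prod _ _ (fun ξ => aleph_le_aleph.2 (hσ_le ξ))
      _ = Cardinal.lift.{u+1} (ℵ_ α) ^ Cardinal.lift.{u} #(Set.Iio β) := prod_const _ _
      _ = Cardinal.lift.{u + 1} ((ℵ_ α) ^ β.card) := by
          rw [Cardinal.mk_Iio_ordinal, Cardinal.lift_lift, ← Cardinal.lift_power]
  -- lower bound by 2 ^ β.card
  have h2le : ∀ ξ : Set.Iio β, (2 : Cardinal.{u}) ≤ ℵ_ (σ ξ.1) := fun ξ => by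
    refine le_trans ?_ (aleph0_le_aleph _)
    exact_mod_cast (nat_lt_aleph0 2).le
  have hlb1 : Cardinal.lift.{u + 1} (2 ^ β.card) ≤
      Cardinal.prod (fun ξ : Set.Iio β => ℵ_ (σ ξ.1)) := by
    have h := prod_le_prod (fun _ : Set.Iio β => (2 : Cardinal.{u}))
      (fun ξ : Set.Iio β => ℵ_ (σ ξ.1)) h2le
    rwa [prod_const, Cardinal.mk_Iio_ordinal, Cardinal.lift_lift, ← Cardinal.lift_power] at h
  -- α is a limit ordinal
  have hexists_gt : ∀ a < α, ∃ ξ : Set.Iio β, a < σ ξ.1 := by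
    intro a ha
    by_contra h
    push_neg at h
    have : α ≤ a := by rw [hα]; exact ciSup_le' h
    exact absurd ha (not_lt.2 this)
  have halim : Order.IsSuccLimit α := by
    refine Ordinal.isSuccLimit_iff.2 ⟨?_, Order.isSuccPrelimit_of_succ_lt ?_⟩
    · intro h0
      have h1β : (1 : Ordinal.{u}) < β := Ordinal.one_lt_of_isSuccLimit hβ
      have : σ 0 < σ 1 := hmono 0 1 zero_lt_one h1β
      have h1le : σ 1 ≤ α := hσ_le ⟨1, h1β⟩
      have : (0 : Ordinal.{u}) < α := lt_of_le_of_lt zero_le (this.trans_le h1le)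
      exact absurd h0 this.ne'
    · intro a ha
      obtain ⟨ξ, hξ⟩ := hexists_gt a ha
      have hsucc : Order.succ ξ.1 < β := hβ.succ_lt ξ.2
      have h1 : σ ξ.1 < σ (Order.succ ξ.1) := hmono _ _ (Order.lt_succ _) hsucc
      have h2 : σ (Order.succ ξ.1) ≤ α := hσ_le ⟨Order.succ ξ.1, hsucc⟩
      exact lt_of_le_of_lt (Order.succ_le_of_lt hξ) (h1.trans_le h2)
  -- lower bound by succ (ℵ_ α) via König's theorem
  set F : Set.Iio β → Cardinal.{u + 1} := fun ξ => Cardinal.lift.{u + 1} (ℵ_ (σ ξ.1)) with hF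
  set S : Set.Iio β → Cardinal.{u + 1} := fun ξ =>
    if h : ∃ η : Ordinal.{u}, Order.succ η = ξ.1 then
      Cardinal.lift.{u + 1} (ℵ_ (σ (Classical.choose h))) else 0 with hS
  have hSlt : ∀ ξ, S ξ < F ξ := by
    intro ξ
    by_cases h : ∃ η : Ordinal.{u}, Order.succ η = ξ.1
    · have hch := Classical.choose_spec h
      have hlt : Classical.choose h < ξ.1 := by
        have := Order.lt_succ (Classical.choose h); rwa [hch] at this
      simp only [hS, hF, dif_pos h]
      exact Cardinal.lift_lt.2 (aleph_lt_aleph.2 (hmono _ _ hlt ξ.2))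
    · simp only [hS, hF, dif_neg h]
      have h0 : (0 : Cardinal.{u + 1}) = Cardinal.lift.{u + 1, u} 0 := by simp
      rw [h0]
      exact Cardinal.lift_lt.2 (aleph_pos _)
  have hkey : ∀ η : Ordinal.{u}, η < β → Cardinal.lift.{u + 1} (ℵ_ (σ η)) ≤ Cardinal.sum.{u + 1, u + 1} S := by
    intro η hη
    have hsucc : Order.succ η < β := hβ.succ_lt hη
    have hex : ∃ η' : Ordinal.{u}, Order.succ η' = (⟨Order.succ η, hsucc⟩ : Set.Iio β).1 :=
      ⟨η, rfl⟩
    have hval : S ⟨Order.succ η, hsucc⟩ = Cardinal.lift.{u + 1} (ℵ_ (σ η)) := by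
      have hch := Classical.choose_spec hex
      have : Classical.choose hex = η := by
        have h1 : Order.succ (Classical.choose hex) = Order.succ η := hch
        exact Order.succ_eq_succ_iff_of_not_isMax (not_isMax _) (not_isMax _) |>.1 h1
      simp only [hS, dif_pos hex, this]
    rw [← hval]
    exact le_sum.{u + 1, u + 1} S _
  have hlb2 : Cardinal.lift.{u + 1} (Order.succ (ℵ_ α)) ≤
      Cardinal.prod (fun ξ : Set.Iio β => ℵ_ (σ ξ.1)) := by
    have hsum_lt : Cardinal.sum.{u + 1, u + 1} S < Cardinal.prod F := sum_lt_prod.{u + 1, u + 1} S F hSlt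
    have hprodF : Cardinal.prod F =
        Cardinal.prod (fun ξ : Set.Iio β => ℵ_ (σ ξ.1)) := by
      rw [hF, ← lift_prod, Cardinal.lift_id]
    have hbdd2 : BddAbove (Set.range fun a : Set.Iio α => ℵ_ a.1) := by
      refine ⟨ℵ_ α, ?_⟩
      rintro c ⟨a, rfl⟩
      exact aleph_le_aleph.2 a.2.le
    have halpha : Cardinal.lift.{u + 1} (ℵ_ α) ≤ Cardinal.sum.{u + 1, u + 1} S := by
      rw [aleph_limit halim, Cardinal.lift_iSup hbdd2]
      refine ciSup_le' ?_
      intro a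
      obtain ⟨ξ, hξ⟩ := hexists_gt a.1 a.2
      exact (Cardinal.lift_le.2 (aleph_le_aleph.2 hξ.le)).trans (hkey ξ.1 ξ.2)
    rw [Cardinal.lift_succ]
    refine Order.succ_le_of_lt ?_
    calc Cardinal.lift.{u + 1} (ℵ_ α) ≤ Cardinal.sum.{u + 1, u + 1} S := halpha
      _ < Cardinal.prod F := hsum_lt
      _ = Cardinal.prod (fun ξ : Set.Iio β => ℵ_ (σ ξ.1)) := hprodF
  -- combine
  have hmax := my_sch_pow hSCH hκ (ℵ_ α)
  refine hub.antisymm ?_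
  calc Cardinal.lift.{u + 1} ((ℵ_ α) ^ β.card)
      ≤ Cardinal.lift.{u + 1} (max (Order.succ (ℵ_ α)) (2 ^ β.card)) := Cardinal.lift_le.2 hmax
    _ = max (Cardinal.lift.{u + 1} (Order.succ (ℵ_ α))) (Cardinal.lift.{u + 1} (2 ^ β.card)) :=
        Cardinal.lift_max
    _ ≤ Cardinal.prod (fun ξ : Set.Iio β => ℵ_ (σ ξ.1)) := max_le hlb2 hlb1
end
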